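/- Let (G, ·, e, α) be a Hom-group, let g ∈ G have invertibility index n and let l ∈ G have invertibility index m. If h, k ∈ G satisfy (α^i(g)·h)·(k·α^j(l)) = (α^i(g)·k)·(h·α^j(l)) for all i ≥ n and all j ≥ m, then α³(h·k) = α³(k·h). -/

import Mathlib

/-- A Hom-group `(G, ·, e, α)` with inverse map `inv`. -/
structure HomGroup (G : Type*) where
  mul : G → G → G
  e : G
  α : G → G
  inv : G → G
  hom_assoc : ∀ g h k, mul (α g) (mul h k) = mul (mul g h) (α k)
  α_mul : ∀ g h, α (mul g h) = mul (α g) (α h)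
  mul_e : ∀ g, mul g e = α g
  e_mul : ∀ g, mul e g = α g
  α_e : α e = e
  inv_anti : ∀ g h, inv (mul g h) = mul (inv h) (inv g)
  exists_inv_index : ∀ g, ∃ k,
    (α)^[k] (mul g (inv g)) = e ∧ (α)^[k] (mul (inv g) g) = e

/-- A Hom-group is regular when `α` is bijective; then the invertibility
condition simplifies to `g·g⁻¹ = g⁻¹·g = e`. -/
def HomGroup.IsRegular {G : Type*} (H : HomGroup G) : Prop :=
  Function.Bijective H.α ∧ ∀ g, H.mul g (H.inv g) = H.e ∧ H.mul (H.inv g) g = H.e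

/-- `g` has invertibility index `n`: `n` is the smallest natural number with
`α^n(g·g⁻¹) = α^n(g⁻¹·g) = e`. -/
def HomGroup.HasInvIndex {G : Type*} (H : HomGroup G) (g : G) (n : ℕ) : Prop :=
  ((H.α)^[n] (H.mul g (H.inv g)) = H.e ∧ (H.α)^[n] (H.mul (H.inv g) g) = H.e) ∧
    ∀ m, ((H.α)^[m] (H.mul g (H.inv g)) = H.e ∧ (H.α)^[m] (H.mul (H.inv g) g) = H.e) → n ≤ m

/-- A Hom-subgroup: a subset containing `e`, closed under inverses and products. -/
def HomGroup.IsHomSubgroup {G : Type*} (Hg : HomGroup G) (H : Set G) : Prop :=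
  Hg.e ∈ H ∧ (∀ h ∈ H, Hg.inv h ∈ H) ∧ ∀ h₁ ∈ H, ∀ h₂ ∈ H, Hg.mul h₁ h₂ ∈ H

/-! With `a = αⁿ(g)`, `a' = αⁿ(g⁻¹)`, `b = αᵐ(l)` and `b' = αᵐ(l⁻¹)` we have `a'·a = e` and
`b·b' = e`. Multiplying the hypothesis for `i = n`, `j = m` on the right by `α²(b')` and using
Hom-associativity turns it into `α²(a)·α(h·k) = α²(a)·α(k·h)`; multiplying that on the left by
`α³(a')` cancels `α²(a)` at the cost of one more application of `α`. -/

namespace HomGroup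

variable {G : Type*} (H : HomGroup G)

theorem iterate_mul (t : ℕ) (x y : G) :
    H.α^[t] (H.mul x y) = H.mul (H.α^[t] x) (H.α^[t] y) := by
  induction t with
  | zero => rfl
  | succ t ih => simp only [Function.iterate_succ_apply', ih, H.α_mul]

theorem HasInvIndex.iterate_mul_iterate_inv {g : G} {n : ℕ} (hg : H.HasInvIndex g n) :
    H.mul (H.α^[n] g) (H.α^[n] (H.inv g)) = H.e := by
  rw [← iterate_mul]; exact hg.1.1

theorem HasInvIndex.iterate_inv_mul_iterate {g : G} {n : ℕ} (hg : H.HasInvIndex g n) :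
    H.mul (H.α^[n] (H.inv g)) (H.α^[n] g) = H.e := by
  rw [← iterate_mul]; exact hg.1.2

theorem mul_mul_alpha_alpha_of_mul_eq_e {b b' : G} (hb : H.mul b b' = H.e) (x v : G) :
    H.mul (H.mul x (H.mul v b)) (H.α (H.α b')) = H.mul (H.α x) (H.α (H.α v)) := by
  rw [← H.hom_assoc, ← H.hom_assoc, hb, H.mul_e]

theorem alpha_alpha_mul_alpha_mul_eq_of_mul_mul_eq {a b b' : G} (hb : H.mul b b' = H.e)
    {u v u' v' : G} (huv : H.mul (H.mul a u) (H.mul v b) = H.mul (H.mul a u') (H.mul v' b)) :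
    H.mul (H.α (H.α a)) (H.α (H.mul u v)) = H.mul (H.α (H.α a)) (H.α (H.mul u' v')) := by
  have key : ∀ s t, H.mul (H.mul (H.mul a s) (H.mul t b)) (H.α (H.α b')) =
      H.mul (H.α (H.α a)) (H.α (H.mul s t)) := fun s t => by
    rw [H.mul_mul_alpha_alpha_of_mul_eq_e hb, H.α_mul, H.α_mul, H.hom_assoc]
  rw [← key, ← key, huv]

theorem alpha_cubed_eq_of_alpha_alpha_mul_eq {a a' : G} (ha : H.mul a' a = H.e) {x y : G}
    (hxy : H.mul (H.α (H.α a)) (H.α x) = H.mul (H.α (H.α a)) (H.α y)) :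
    H.α^[3] x = H.α^[3] y := by
  have cancel : ∀ w, H.mul (H.α (H.α (H.α a'))) (H.mul (H.α (H.α a)) (H.α w)) =
      H.α^[3] w := fun w => by
    rw [H.hom_assoc, ← H.α_mul (H.α a'), ← H.α_mul a', ha, H.α_e, H.α_e, H.e_mul]; rfl
  rw [← cancel, ← cancel, hxy]

end HomGroup

theorem stmt2 {G : Type*} (H : HomGroup G) (g l : G) (n m : ℕ)
    (hg : H.HasInvIndex g n) (hl : H.HasInvIndex l m) (h k : G)
    (hyp : ∀ i, n ≤ i → ∀ j, m ≤ j →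
      H.mul (H.mul ((H.α)^[i] g) h) (H.mul k ((H.α)^[j] l)) =
        H.mul (H.mul ((H.α)^[i] g) k) (H.mul h ((H.α)^[j] l))) :
    (H.α)^[3] (H.mul h k) = (H.α)^[3] (H.mul k h) :=
  H.alpha_cubed_eq_of_alpha_alpha_mul_eq hg.iterate_inv_mul_iterate <|
    H.alpha_alpha_mul_alpha_mul_eq_of_mul_mul_eq hl.iterate_mul_iterate_inv
      (hyp n le_rfl m le_rfl)
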